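/- arXiv:0808.2268 — 3 statements merged into one kernel-verified Lean document; each statement's English description precedes it below -/
import Mathlib

section
/- Let ν_p be the product Bernoulli(p) measure on 𝔽₂^ℕ (each coordinate equal to 1 with probability p, independently), and let η be uniform on 𝔽₂ independent of z ∼ ν_p. Let μ_p be the law on {0,1}^(𝔽₂^(⊕ℕ)) of the function x ↦ 1[⟨x,z⟩ + η = 0]. Then μ_p is invariant under the coordinate-permuting action of the group Γ generated by finitely supported permutations of ℕ and by all bit-flips x ↦ x + eᵢ. -/
/-!
A bit-flip at coordinate `i` changes `⟨x,z⟩` by `z i`, and the uniform phase `η` absorbs this: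
the shear `(z, η) ↦ (z, η + z i)` preserves `ν ⊗ uniform`. A permutation `π` of the coordinates
of `x` becomes the permutation `z ↦ z ∘ π` of the hidden vector, which preserves `ν` because a
Bernoulli product measure is determined by its values on cylinders, and these values are
permutation invariant. Since the permutations preserving a measure under precomposition form a
subgroup, it suffices to check the generators of the cube group.
-/

open MeasureTheory

/-- The group generated by finitely supported coordinate permutations of `ℕ` and
bit-flips, acting on `T = 𝔽₂^(⊕ℕ)`. -/
def cubeGroup : Subgroup (Equiv.Perm (ℕ →₀ ZMod 2)) :=
  Subgroup.closure
    ({e | ∃ π : Equiv.Perm ℕ, {i | π i ≠ i}.Finite ∧ e = Finsupp.equivCongrLeft π} ∪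
     {e | ∃ i : ℕ, e = Equiv.addLeft (Finsupp.single i 1)})

/-- The pairing `⟨x,z⟩ = ∑ᵢ xᵢzᵢ` (a finite sum since `x` is finitely supported). -/
def cubePair (x : ℕ →₀ ZMod 2) (z : ℕ → ZMod 2) : ZMod 2 :=
  ∑ i ∈ x.support, x i * z i

/-- `ν` is the product Bernoulli(`p`) measure on `𝔽₂^ℕ`: each coordinate equals `1`
with probability `p`, independently. -/
def IsBernoulliProduct (p : ℝ) (ν : Measure (ℕ → ZMod 2)) : Prop :=
  IsProbabilityMeasure ν ∧
    ∀ (s : Finset ℕ) (f : ℕ → ZMod 2),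
      ν {z | ∀ i ∈ s, z i = f i} =
        ∏ i ∈ s, if f i = 1 then ENNReal.ofReal p else ENNReal.ofReal (1 - p)

section Precomposition

variable {α β : Type*} [MeasurableSpace β]

lemma measurable_comp_right {α' : Type*} (f : α → α') :
    Measurable fun ω : α' → β => ω ∘ f :=
  measurable_pi_lambda _ fun x => measurable_pi_apply (f x)

def precompStabilizer (μ : Measure (α → β)) : Subgroup (Equiv.Perm α) where
  carrier := {γ | μ.map (fun ω => ω ∘ γ) = μ}
  one_mem' := Measure.map_id
  mul_mem' {γ₁ γ₂} h₁ h₂ := by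
    change μ.map ((fun ω => ω ∘ γ₂) ∘ fun ω => ω ∘ γ₁) = μ
    rw [← Measure.map_map (measurable_comp_right _) (measurable_comp_right _), h₁, h₂]
  inv_mem' {γ} h := by
    change μ.map (fun ω => ω ∘ ⇑γ⁻¹) = μ
    conv_lhs => rw [← h]
    rw [Measure.map_map (measurable_comp_right _) (measurable_comp_right _)]
    convert Measure.map_id
    ext ω x
    simp

lemma MeasureTheory.Measure.map_comp_right_map_eq {X : Type*} [MeasurableSpace X] {m : Measure X}
    {F : X → α → β} (hF : Measurable F) {Φ : X → X} (hΦ : MeasurePreserving Φ m m) {γ : α → α}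
    (h : ∀ q, F q ∘ γ = F (Φ q)) :
    (m.map F).map (fun ω => ω ∘ γ) = m.map F := by
  rw [Measure.map_map (measurable_comp_right γ) hF,
    show (fun ω => ω ∘ γ) ∘ F = F ∘ Φ from funext h, ← Measure.map_map hF hΦ.measurable,
    hΦ.map_eq]

end Precomposition

lemma PMF.map_add_right_uniformOfFintype {G : Type*} [AddGroup G] [Fintype G] [MeasurableSpace G]
    [MeasurableSingletonClass G] (c : G) :
    (PMF.uniformOfFintype G).toMeasure.map (· + c) = (PMF.uniformOfFintype G).toMeasure := by
  refine Measure.ext_of_singleton fun a => ?_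
  rw [Measure.map_apply (measurable_add_const c) (measurableSet_singleton a),
    Set.preimage_add_right_singleton, PMF.toMeasure_apply_singleton _ _ (measurableSet_singleton _),
    PMF.toMeasure_apply_singleton _ _ (measurableSet_singleton _),
    PMF.uniformOfFintype_apply, PMF.uniformOfFintype_apply]

lemma cubePair_eq_linearCombination (x : ℕ →₀ ZMod 2) (z : ℕ → ZMod 2) :
    cubePair x z = Finsupp.linearCombination (ZMod 2) z x := by
  rw [Finsupp.linearCombination_apply]
  rfl

lemma measurable_cubePair (x : ℕ →₀ ZMod 2) : Measurable (cubePair x) :=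
  Finset.measurable_sum _ fun i _ => Measurable.of_discrete.comp (measurable_pi_apply i)

section HyperplaneLaw

def hyperplaneConfig (q : (ℕ → ZMod 2) × ZMod 2) : (ℕ →₀ ZMod 2) → Bool :=
  fun x => decide (cubePair x q.1 + q.2 = 0)

noncomputable def hyperplaneLaw (ν : Measure (ℕ → ZMod 2)) : Measure ((ℕ →₀ ZMod 2) → Bool) :=
  (ν.prod (PMF.uniformOfFintype (ZMod 2)).toMeasure).map hyperplaneConfig

lemma measurable_hyperplaneConfig : Measurable hyperplaneConfig :=
  measurable_pi_lambda _ fun x =>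
    (Measurable.of_discrete (f := fun v : ZMod 2 × ZMod 2 => decide (v.1 + v.2 = 0))).comp
      (((measurable_cubePair x).comp measurable_fst).prodMk measurable_snd)

lemma hyperplaneConfig_comp_equivCongrLeft (π : Equiv.Perm ℕ) (q : (ℕ → ZMod 2) × ZMod 2) :
    hyperplaneConfig q ∘ Finsupp.equivCongrLeft π = hyperplaneConfig (q.1 ∘ π, q.2) := by
  ext x
  simp only [hyperplaneConfig, Function.comp_apply, Finsupp.equivCongrLeft_apply,
    Finsupp.equivMapDomain_eq_mapDomain, cubePair_eq_linearCombination,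
    Finsupp.linearCombination_mapDomain]

lemma hyperplaneConfig_comp_addLeft_single (i : ℕ) (q : (ℕ → ZMod 2) × ZMod 2) :
    hyperplaneConfig q ∘ Equiv.addLeft (Finsupp.single i 1) =
      hyperplaneConfig (q.1, q.2 + q.1 i) := by
  ext x
  simp only [hyperplaneConfig, Function.comp_apply, Equiv.coe_addLeft,
    cubePair_eq_linearCombination, map_add, Finsupp.linearCombination_single, one_smul,
    add_comm (q.1 i), add_assoc]

variable {ν : Measure (ℕ → ZMod 2)} [SFinite ν]

lemma equivCongrLeft_mem_precompStabilizer_hyperplaneLaw {π : Equiv.Perm ℕ}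
    (hπ : MeasurePreserving (· ∘ π) ν ν) :
    Finsupp.equivCongrLeft π ∈ precompStabilizer (hyperplaneLaw ν) :=
  Measure.map_comp_right_map_eq measurable_hyperplaneConfig (hπ.prod (.id _))
    (hyperplaneConfig_comp_equivCongrLeft π)

lemma addLeft_single_mem_precompStabilizer_hyperplaneLaw (i : ℕ) :
    Equiv.addLeft (Finsupp.single i 1) ∈ precompStabilizer (hyperplaneLaw ν) := by
  have hshear : MeasurePreserving (fun q : (ℕ → ZMod 2) × ZMod 2 => (q.1, q.2 + q.1 i))
      (ν.prod (PMF.uniformOfFintype (ZMod 2)).toMeasure)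
      (ν.prod (PMF.uniformOfFintype (ZMod 2)).toMeasure) :=
    (MeasurePreserving.id ν).skew_product (g := fun z η => η + z i)
      ((Measurable.of_discrete (f := fun v : ZMod 2 × ZMod 2 => v.1 + v.2)).comp
        (measurable_snd.prodMk ((measurable_pi_apply i).comp measurable_fst)))
      (ae_of_all _ fun z => PMF.map_add_right_uniformOfFintype (z i))
  exact Measure.map_comp_right_map_eq measurable_hyperplaneConfig hshear
    (hyperplaneConfig_comp_addLeft_single i)

lemma cubeGroup_le_precompStabilizer_hyperplaneLaw
    (hν : ∀ π : Equiv.Perm ℕ, MeasurePreserving (· ∘ π) ν ν) :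
    cubeGroup ≤ precompStabilizer (hyperplaneLaw ν) := by
  refine Subgroup.closure_le _ |>.mpr ?_
  rintro _ (⟨π, -, rfl⟩ | ⟨i, rfl⟩)
  · exact equivCongrLeft_mem_precompStabilizer_hyperplaneLaw (hν π)
  · exact addLeft_single_mem_precompStabilizer_hyperplaneLaw i

end HyperplaneLaw

lemma MeasureTheory.Measure.pi_ext_of_cylinder {ι α : Type*} [Countable α] [MeasurableSpace α]
    [MeasurableSingletonClass α] {μ ν : Measure (ι → α)} [IsFiniteMeasure μ]
    (h : ∀ (s : Finset ι) (f : ι → α),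
      μ {z | ∀ i ∈ s, z i = f i} = ν {z | ∀ i ∈ s, z i = f i}) :
    μ = ν := by
  -- both are projective limits of the finite-dimensional marginals of `μ`
  refine IsProjectiveLimit.unique (P := fun s => μ.map s.restrict) (fun _ => rfl) fun s => ?_
  refine Measure.ext_of_singleton fun (g : s → α) => ?_
  rw [Measure.map_apply (Finset.measurable_restrict s) (measurableSet_singleton g),
    Measure.map_apply (Finset.measurable_restrict s) (measurableSet_singleton g)]
  rcases (s.restrict ⁻¹' {g} : Set (ι → α)).eq_empty_or_nonempty with hempty | ⟨z₀, hz₀⟩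
  · rw [hempty, measure_empty, measure_empty]
  · have hfiber : (s.restrict ⁻¹' {g} : Set (ι → α)) = {z | ∀ i ∈ s, z i = z₀ i} := by
      ext z
      simp only [Set.mem_preimage, Set.mem_singleton_iff] at hz₀ ⊢
      simp [← hz₀, funext_iff]
    rw [hfiber, h]

namespace IsBernoulliProduct

variable {p : ℝ} {ν : Measure (ℕ → ZMod 2)}

lemma unique {ν' : Measure (ℕ → ZMod 2)} (hν : IsBernoulliProduct p ν)
    (hν' : IsBernoulliProduct p ν') : ν = ν' :=
  have := hν.1
  Measure.pi_ext_of_cylinder fun s f => by rw [hν.2 s f, hν'.2 s f]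

lemma map_comp_perm (hν : IsBernoulliProduct p ν) (π : Equiv.Perm ℕ) :
    IsBernoulliProduct p (ν.map (· ∘ π)) := by
  have := hν.1
  have hmeas : Measurable fun z : ℕ → ZMod 2 => z ∘ π := measurable_comp_right π
  refine ⟨Measure.isProbabilityMeasure_map hmeas.aemeasurable, fun s f => ?_⟩
  have hpre : (· ∘ π) ⁻¹' {z : ℕ → ZMod 2 | ∀ i ∈ s, z i = f i} =
      {z | ∀ j ∈ s.map π.toEmbedding, z j = (f ∘ π.symm) j} := by
    ext z
    simp only [Set.mem_preimage, Set.mem_ofPred_eq, Function.comp_apply, Finset.mem_map_equiv]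
    exact ⟨fun hz j hj => by simpa using hz _ hj,
      fun hz i hi => by simpa using hz (π i) (by simpa)⟩
  rw [Measure.map_apply hmeas, hpre, hν.2, Finset.prod_map]
  · simp
  · measurability

lemma measurePreserving_comp_perm (hν : IsBernoulliProduct p ν) (π : Equiv.Perm ℕ) :
    MeasurePreserving (· ∘ π) ν ν :=
  ⟨measurable_comp_right π, (hν.map_comp_perm π).unique hν⟩

end IsBernoulliProduct

/-- The law `μ_p` of the random configuration `x ↦ 1[⟨x,z⟩ + η = 0]`, with
`z ∼ Bernoulli(p)^⊗ℕ` and `η` uniform on `𝔽₂` independent of `z`, is invariant under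
the coordinate-permuting action `(τ^γ ω)(x) = ω(γ x)` of the cube group. -/
theorem bernoulli_hyperplane_law_cube_exchangeable (p : ℝ) (ν : Measure (ℕ → ZMod 2))
    (hν : IsBernoulliProduct p ν) :
    ∀ γ ∈ cubeGroup,
      Measure.map (fun ω : (ℕ →₀ ZMod 2) → Bool => ω ∘ γ)
          (Measure.map
            (fun p : (ℕ → ZMod 2) × ZMod 2 =>
              fun x : ℕ →₀ ZMod 2 => decide (cubePair x p.1 + p.2 = 0))
            (ν.prod (PMF.uniformOfFintype (ZMod 2)).toMeasure)) =
        Measure.map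
          (fun p : (ℕ → ZMod 2) × ZMod 2 =>
            fun x : ℕ →₀ ZMod 2 => decide (cubePair x p.1 + p.2 = 0))
          (ν.prod (PMF.uniformOfFintype (ZMod 2)).toMeasure) := by
  have := hν.1
  exact fun γ hγ => cubeGroup_le_precompStabilizer_hyperplaneLaw hν.measurePreserving_comp_perm hγ
end

section
/- Let U be a compact abelian group with Haar probability measure μ_U, and let ν ∈ Pr(U). Define μ on U^(𝔽₂^(⊕ℕ)) as the law of (g_v)_v where g_𝟘 ∼ μ_U, (gᵢ°)_{i∈ℕ} are i.i.d. with law ν independent of g_𝟘, and g_v = g_𝟘 + ∑_{i : v_i=1} gᵢ°. Then μ is invariant under the coordinate-permutation action of Sym₀(ℕ) on 𝔽₂^(⊕ℕ) (hypergraph exchangeability of the random-walk law). -/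
open MeasureTheory

/-- `P` is the law on `U^ℕ` of an i.i.d. sequence with common distribution `ν`. -/
def IsIIDProduct {U : Type*} [MeasurableSpace U] (ν : Measure U)
    (P : Measure (ℕ → U)) : Prop :=
  IsProbabilityMeasure P ∧
    ∀ (s : Finset ℕ) (B : ℕ → Set U), (∀ i, MeasurableSet (B i)) →
      P {h | ∀ i ∈ s, h i ∈ B i} = ∏ i ∈ s, ν (B i)

/-- The random-walk configuration map: given `g₀` and increments `(gᵢ°)`, it produces
`(g_v)_v` with `g_v = g₀ + ∑_{i : v_i = 1} gᵢ°`. -/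
noncomputable def randomWalkMap (U : Type*) [AddCommGroup U]
    (q : U × (ℕ → U)) : (ℕ →₀ ZMod 2) → U :=
  fun v => q.1 + ∑ i ∈ v.support, q.2 i

/-! The increments are exchangeable, and a permutation of the coordinates of `v` amounts to
the same permutation of the increments; so the law of the walk is the image of an invariant
measure under a map intertwining the two permutation actions. -/

/-- `f` need not be measurable: if it is not a.e.-measurable, both sides are zero. -/
theorem MeasureTheory.Measure.map_map_eq_of_comp_eq {α β : Type*} [MeasurableSpace α]
    [MeasurableSpace β] {μ : Measure α} {σ : α → α} {Φ : β → β} {f : α → β}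
    (hσ : Measurable σ) (hΦ : Measurable Φ) (hμ : μ.map σ = μ) (hf : Φ ∘ f = f ∘ σ) :
    (μ.map f).map Φ = μ.map f := by
  by_cases hfμ : AEMeasurable f μ
  · have hfμσ : AEMeasurable f (μ.map σ) := by rwa [hμ]
    rw [AEMeasurable.map_map_of_aemeasurable hΦ.aemeasurable hfμ, hf,
      ← AEMeasurable.map_map_of_aemeasurable hfμσ hσ.aemeasurable, hμ]
  · rw [Measure.map_of_not_aemeasurable hfμ, Measure.map_zero]

theorem IsIIDProduct.map_comp_perm {U : Type*} [MeasurableSpace U] {ν : Measure U}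
    {P : Measure (ℕ → U)} (hP : IsIIDProduct ν P) (e : Equiv.Perm ℕ) :
    P.map (fun h : ℕ → U => h ∘ e) = P := by
  obtain ⟨hPprob, hPbox⟩ := hP
  have hmeas : Measurable (fun h : ℕ → U => h ∘ e) :=
    measurable_pi_iff.2 fun i => measurable_pi_apply (e i)
  have : IsProbabilityMeasure (P.map (fun h : ℕ → U => h ∘ e)) :=
    Measure.isProbabilityMeasure_map hmeas.aemeasurable
  have hbox (s : Finset ℕ) (B : ℕ → Set U) (hB : ∀ i, MeasurableSet (B i)) :
      P.map (fun h => h ∘ e) ((s : Set ℕ).pi B) = P ((s : Set ℕ).pi B) := by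
    have hpre : (fun h : ℕ → U => h ∘ e) ⁻¹' (s : Set ℕ).pi B
        = {h : ℕ → U | ∀ j ∈ s.map e.toEmbedding, h j ∈ B (e.symm j)} := by
      ext h
      simp only [Set.mem_preimage, Set.mem_pi, Finset.mem_coe, Function.comp_apply,
        Set.mem_ofPred_eq, Finset.mem_map_equiv]
      exact ⟨fun H j hj => by simpa using H _ hj, fun H i hi => by simpa using H (e i) (by simpa)⟩
    rw [Measure.map_apply hmeas (.pi s.countable_toSet fun i _ => hB i), hpre,
      hPbox _ _ fun j => hB (e.symm j), Finset.prod_map]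
    simp only [Equiv.coe_toEmbedding, Equiv.symm_apply_apply]
    exact (hPbox s B hB).symm
  refine ext_of_generate_finite _ generateFrom_squareCylinders.symm
    (isPiSystem_squareCylinders (fun _ => MeasurableSpace.isPiSystem_measurableSet)
      fun _ => .univ) ?_ (by simp)
  rintro _ ⟨s, B, hB, rfl⟩
  exact hbox s B (by simpa using hB)

theorem randomWalkMap_equivCongrLeft {U : Type*} [AddCommGroup U] (e : ℕ ≃ ℕ)
    (q : U × (ℕ → U)) (v : ℕ →₀ ZMod 2) :
    randomWalkMap U q (Finsupp.equivCongrLeft e v) = randomWalkMap U (q.1, q.2 ∘ e) v := by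
  simp only [randomWalkMap]
  rw [show (Finsupp.equivCongrLeft e v).support = v.support.map e.toEmbedding from rfl,
    Finset.sum_map]
  rfl

theorem randomWalkLaw_symZero_invariant_general (U : Type*) [AddCommGroup U]
    [MeasurableSpace U]
    (μU : Measure U) [IsProbabilityMeasure μU]
    (ν : Measure U)
    (P : Measure (ℕ → U)) (hP : IsIIDProduct ν P) :
    ∀ π : Equiv.Perm ℕ, {i | π i ≠ i}.Finite →
      Measure.map
          (fun ω : (ℕ →₀ ZMod 2) → U => fun v => ω (Finsupp.equivCongrLeft π.symm v))
          (Measure.map (randomWalkMap U) (μU.prod P)) =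
        Measure.map (randomWalkMap U) (μU.prod P) := by
  intro π _
  have : IsProbabilityMeasure P := hP.1
  have hperm : Measurable fun h : ℕ → U => h ∘ π.symm :=
    measurable_pi_iff.2 fun i => measurable_pi_apply (π.symm i)
  refine Measure.map_map_eq_of_comp_eq (measurable_id.prodMap hperm)
    (measurable_pi_iff.2 fun v => measurable_pi_apply _) ?_ ?_
  · rw [← Measure.map_prod_map _ _ measurable_id hperm, Measure.map_id, hP.map_comp_perm]
  · funext q v
    exact randomWalkMap_equivCongrLeft π.symm q v

/-- The random-walk law `μ` on `U^(𝔽₂^(⊕ℕ))` (with `g_𝟘 ∼ Haar`, i.i.d. increments of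
law `ν` and `g_v = g_𝟘 + ∑_{i : v_i=1} gᵢ°`) is invariant under the
coordinate-permutation action of the finitely supported permutations of `ℕ`. -/
theorem randomWalkLaw_symZero_invariant (U : Type*) [AddCommGroup U]
    [TopologicalSpace U] [IsTopologicalAddGroup U] [CompactSpace U]
    [MeasurableSpace U] [BorelSpace U]
    (μU : Measure U) [IsProbabilityMeasure μU] [μU.IsAddHaarMeasure]
    (ν : Measure U) [IsProbabilityMeasure ν]
    (P : Measure (ℕ → U)) (hP : IsIIDProduct ν P) :
    ∀ π : Equiv.Perm ℕ, {i | π i ≠ i}.Finite →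
      Measure.map
          (fun ω : (ℕ →₀ ZMod 2) → U => fun v => ω (Finsupp.equivCongrLeft π.symm v))
          (Measure.map (randomWalkMap U) (μU.prod P)) =
        Measure.map (randomWalkMap U) (μU.prod P) :=
  randomWalkLaw_symZero_invariant_general U μU ν P hP
end

section
/- Let U be a compact abelian group with Haar measure μ_U and ν ∈ Pr(U), and let μ be the random-walk law on U^(𝔽₂^(⊕ℕ)) as above (g_v = g_𝟘 + ∑_{i:v_i=1} gᵢ°). If the maps (g₀,g₁) ↦ (g₀, g₀+g₁) and (g₀,g₁) ↦ (g₀+g₁, g₀) from U × U to U × U have the same distribution under μ_U ⊗ ν, then μ is additionally invariant under each bit-flip σᵢ : v ↦ v + eᵢ acting by (σᵢ·ω)(v) = ω(v + eᵢ). -/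
/-!
Fix a direction `i` and split off the increment `gᵢ°`. The configuration is then obtained by
gluing two walks driven by the remaining increments: one started at `g₀` on the face `vᵢ = 0`,
one started at `g₀ + gᵢ°` on the face `vᵢ = 1`. Since resampling one coordinate of an i.i.d.
sequence keeps it i.i.d., the random-walk law is the image of `law(g₀, g₀ + gᵢ°) ⊗ P` under
this gluing, and flipping bit `i` only swaps the two starting points; the symmetry hypothesis
says that this swap preserves `law(g₀, g₀ + gᵢ°)`.

Addition `U × U → U` need not be measurable for the product σ-algebra (`U` is not assumed
second countable), so a.e.-measurability has to be carried along. It is inherited from that of the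
walk, and this is where Haar measure enters: `g₀ + gᵢ°` is again Haar distributed.
-/

open MeasureTheory

open Function

section ProductMeasure

variable {α β γ δ : Type*} [MeasurableSpace α] [MeasurableSpace β] [MeasurableSpace γ]
  [MeasurableSpace δ] {μ : Measure α} {ν : Measure β}

theorem AEMeasurable.prodMk_left [SFinite ν] {f : α × β → γ} (hf : AEMeasurable f (μ.prod ν)) :
    ∀ᵐ x ∂μ, AEMeasurable (fun y => f (x, y)) ν := by
  filter_upwards [Measure.ae_ae_of_ae_prod hf.ae_eq_mk] with x hx
  exact ⟨fun y => hf.mk f (x, y), hf.measurable_mk.comp measurable_prodMk_left, hx⟩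

theorem AEMeasurable.of_comp_fst [SFinite μ] [SFinite ν] {f : α → γ}
    (hf : AEMeasurable (fun p : α × β => f p.1) (μ.prod ν)) (hν : ν ≠ 0) : AEMeasurable f μ := by
  have := NeZero.mk hν
  obtain ⟨_, hy⟩ := hf.prod_swap.prodMk_left.exists
  exact hy

theorem MeasureTheory.Measure.map_prodMap_id_of_aemeasurable [SFinite μ] [SFinite ν] {f : α → γ}
    (hf : AEMeasurable f μ) :
    (μ.prod ν).map (fun p => (f p.1, p.2)) = (μ.map f).prod ν := by
  have hmk : (fun p : α × β => (f p.1, p.2)) =ᵐ[μ.prod ν] fun p => (hf.mk f p.1, p.2) := by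
    filter_upwards [Measure.quasiMeasurePreserving_fst.ae_eq_comp hf.ae_eq_mk] with p hp
    simp only [comp_apply] at hp
    rw [hp]
  rw [Measure.map_congr hmk, Measure.map_congr hf.ae_eq_mk, ← Measure.map_id (μ := ν),
    Measure.map_prod_map _ _ hf.measurable_mk measurable_id, Measure.map_id]
  rfl

theorem MeasureTheory.Measure.map_comp_prodMap_id [SFinite μ] [SFinite ν] {f : α → γ}
    {H : γ × β → δ} (hf : AEMeasurable f μ) (hH : AEMeasurable H ((μ.map f).prod ν)) :
    (μ.prod ν).map (fun p => H (f p.1, p.2)) = ((μ.map f).prod ν).map H := by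
  rw [← Measure.map_prodMap_id_of_aemeasurable hf] at hH ⊢
  exact (AEMeasurable.map_map_of_aemeasurable hH
    ((hf.comp_quasiMeasurePreserving Measure.quasiMeasurePreserving_fst).prodMk
      measurable_snd.aemeasurable)).symm

end ProductMeasure

theorem MeasureTheory.Measure.map_add_prod_eq_left {G : Type*} [AddGroup G] [MeasurableSpace G]
    [MeasurableAdd G] (μ ν : Measure G) [SFinite μ] [μ.IsAddRightInvariant]
    [IsProbabilityMeasure ν] (hadd : AEMeasurable (fun q : G × G => q.1 + q.2) (μ.prod ν)) :
    (μ.prod ν).map (fun q => q.1 + q.2) = μ := by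
  refine Measure.ext_of_lintegral _ fun f hf => ?_
  rw [lintegral_map' hf.aemeasurable hadd,
    lintegral_prod_symm (fun q => f (q.1 + q.2)) (hf.comp_aemeasurable hadd)]
  simp [lintegral_add_right_eq_self]

theorem measurable_update_prod {ι β : Type*} [DecidableEq ι] [MeasurableSpace β] (i : ι) :
    Measurable fun p : β × (ι → β) => update p.2 i p.1 :=
  measurable_update'.comp measurable_swap

theorem measurable_resample {ι β γ : Type*} [DecidableEq ι] [MeasurableSpace β]
    [MeasurableSpace γ] (i : ι) :
    Measurable fun p : (γ × β) × (ι → β) => (p.1.1, update p.2 i p.1.2) := by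
  fun_prop

namespace IsIIDProduct

variable {U : Type*} [MeasurableSpace U] {ν : Measure U} {P : Measure (ℕ → U)}

theorem ext {Q : Measure (ℕ → U)} (hP : IsIIDProduct ν P) (hQ : IsIIDProduct ν Q) : P = Q := by
  have := hP.1
  refine ext_of_generate_finite _ generateFrom_squareCylinders.symm
    (isPiSystem_squareCylinders (fun _ => MeasurableSpace.isPiSystem_measurableSet)
      fun _ => MeasurableSet.univ) ?_ (by rw [measure_univ, hQ.1.measure_univ])
  rintro _ ⟨s, B, hB, rfl⟩
  have hB' : ∀ j, MeasurableSet (B j) := fun j => hB j (Set.mem_univ j)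
  exact (hP.2 s B hB').trans (hQ.2 s B hB').symm

theorem map_update [IsProbabilityMeasure ν] (hP : IsIIDProduct ν P) (i : ℕ) :
    IsIIDProduct ν ((ν.prod P).map fun p => update p.2 i p.1) := by
  have := hP.1
  refine ⟨Measure.isProbabilityMeasure_map (measurable_update_prod i).aemeasurable,
    fun s B hB => ?_⟩
  have hbox : MeasurableSet {h : ℕ → U | ∀ j ∈ s, h j ∈ B j} :=
    MeasurableSet.pi s.countable_toSet fun j _ => hB j
  have hpre : (fun p : U × (ℕ → U) => update p.2 i p.1) ⁻¹' {h | ∀ j ∈ s, h j ∈ B j} =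
      (if i ∈ s then B i else Set.univ) ×ˢ {h | ∀ j ∈ s.erase i, h j ∈ B j} := by
    ext ⟨b, g⟩
    by_cases hi : i ∈ s <;> simp only [hi, Finset.mem_erase] <;> grind
  rw [Measure.map_apply (measurable_update_prod i) hbox, hpre, Measure.prod_prod, hP.2 _ B hB]
  split_ifs with hi
  · exact Finset.mul_prod_erase s (fun j => ν (B j)) hi
  · rw [measure_univ, one_mul, Finset.erase_eq_of_notMem hi]

theorem map_update_eq [IsProbabilityMeasure ν] (hP : IsIIDProduct ν P) (i : ℕ) :
    (ν.prod P).map (fun p => update p.2 i p.1) = P :=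
  (hP.map_update i).ext hP

theorem map_resample_eq [IsProbabilityMeasure ν] (hP : IsIIDProduct ν P) (μ : Measure U)
    [SFinite μ] (i : ℕ) :
    ((μ.prod ν).prod P).map (fun p => (p.1.1, update p.2 i p.1.2)) = μ.prod P := by
  have := hP.1
  calc _ = (((μ.prod ν).prod P).map MeasurableEquiv.prodAssoc).map
          (Prod.map id fun p => update p.2 i p.1) := by
        rw [Measure.map_map (measurable_id.prodMap (measurable_update_prod i))
          MeasurableEquiv.prodAssoc.measurable]
        rfl
    _ = μ.prod P := by
      rw [Measure.prodAssoc_prod,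
        ← Measure.map_prod_map _ _ measurable_id (measurable_update_prod i), Measure.map_id,
        hP.map_update_eq]

end IsIIDProduct

section Cube

variable {α : Type*}

theorem ZMod.two_add_one_eq_zero_iff (x : ZMod 2) : x + 1 = 0 ↔ x ≠ 0 := by
  revert x; decide

noncomputable def bitFlip (i : ℕ) (ω : (ℕ →₀ ZMod 2) → α) : (ℕ →₀ ZMod 2) → α :=
  fun v => ω (v + Finsupp.single i 1)

noncomputable def glueFaces (i : ℕ) (ω₀ ω₁ : (ℕ →₀ ZMod 2) → α) : (ℕ →₀ ZMod 2) → α :=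
  fun v => if v i = 0 then ω₀ v else ω₁ (v + Finsupp.single i 1)

theorem bitFlip_glueFaces (i : ℕ) (ω₀ ω₁ : (ℕ →₀ ZMod 2) → α) :
    bitFlip i (glueFaces i ω₀ ω₁) = glueFaces i ω₁ ω₀ := by
  funext v
  have hflip : v + Finsupp.single i 1 + Finsupp.single i 1 = v := by
    rw [add_assoc, ← Finsupp.single_add, show (1 + 1 : ZMod 2) = 0 from rfl,
      Finsupp.single_zero, add_zero]
  simp only [bitFlip, glueFaces, Finsupp.add_apply, Finsupp.single_eq_same,
    ZMod.two_add_one_eq_zero_iff, hflip]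
  by_cases hv : v i = 0 <;> simp [hv]

variable [MeasurableSpace α]

theorem measurable_bitFlip (i : ℕ) : Measurable (bitFlip (α := α) i) :=
  measurable_pi_lambda _ fun _ => measurable_pi_apply _

theorem measurable_glueFaces (i : ℕ) :
    Measurable fun ω : ((ℕ →₀ ZMod 2) → α) × ((ℕ →₀ ZMod 2) → α) => glueFaces i ω.1 ω.2 :=
  measurable_pi_lambda _ fun v => by
    by_cases hv : v i = 0 <;> simp only [glueFaces, hv, if_true, if_false] <;> fun_prop

end Cube

section RandomWalk

variable {U : Type*} [AddCommGroup U]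

theorem Finsupp.support_add_single_one_of_ne_zero {v : ℕ →₀ ZMod 2} {i : ℕ} (hv : v i ≠ 0) :
    (v + Finsupp.single i 1).support = v.support.erase i := by
  ext j
  by_cases hj : j = i
  · subst hj
    simp [hv, (ZMod.two_add_one_eq_zero_iff _).2 hv]
  · simp [hj, Finsupp.single_eq_of_ne hj]

noncomputable def glueWalk (i : ℕ) (p : (U × U) × (ℕ → U)) : (ℕ →₀ ZMod 2) → U :=
  glueFaces i (randomWalkMap U (p.1.1, p.2)) (randomWalkMap U (p.1.2, p.2))

theorem randomWalkMap_update (i : ℕ) (a b : U) (g : ℕ → U) :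
    randomWalkMap U (a, update g i b) = glueWalk i ((a, a + b), g) := by
  funext v
  simp only [glueWalk, glueFaces, randomWalkMap]
  split_ifs with hv
  · have hi : i ∉ v.support := by simpa using hv
    congr 1
    exact Finset.sum_congr rfl fun j hj =>
      update_of_ne (ne_of_mem_of_not_mem hj hi) _ _
  · rw [Finsupp.support_add_single_one_of_ne_zero hv,
      ← Finset.add_sum_erase _ _ (Finsupp.mem_support_iff.2 hv), update_self, add_assoc]
    congr 2
    exact Finset.sum_congr rfl fun j hj =>
      update_of_ne (Finset.ne_of_mem_erase hj) _ _

theorem bitFlip_glueWalk (i : ℕ) (x y : U) (g : ℕ → U) :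
    bitFlip i (glueWalk i ((x, y), g)) = glueWalk i ((y, x), g) :=
  bitFlip_glueFaces i _ _

variable [MeasurableSpace U]

theorem aemeasurable_glueWalk {μ : Measure U} {P : Measure (ℕ → U)} [SFinite P]
    {ρ : Measure (U × U)} [SFinite ρ] (i : ℕ)
    (hW : AEMeasurable (randomWalkMap U) (μ.prod P)) (hfst : ρ.map Prod.fst = μ)
    (hsnd : ρ.map Prod.snd = μ) : AEMeasurable (glueWalk i) (ρ.prod P) := by
  have hWπ : ∀ π : U × U → U, Measurable π → ρ.map π = μ →
      AEMeasurable (fun p : (U × U) × (ℕ → U) => randomWalkMap U (π p.1, p.2)) (ρ.prod P) := by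
    intro π hπ hρπ
    rw [← hρπ, ← Measure.map_id (μ := P), Measure.map_prod_map _ _ hπ measurable_id] at hW
    exact hW.comp_measurable (hπ.prodMap measurable_id)
  exact (measurable_glueFaces i).comp_aemeasurable
    ((hWπ _ measurable_fst hfst).prodMk (hWπ _ measurable_snd hsnd))

end RandomWalk

namespace IsIIDProduct

variable {U : Type*} [AddCommGroup U] [MeasurableSpace U] {ν : Measure U} [IsProbabilityMeasure ν]
  {P : Measure (ℕ → U)} {μ : Measure U} [SFinite μ]

theorem aemeasurable_add_of_aemeasurable_randomWalkMap (hP : IsIIDProduct ν P)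
    (hW : AEMeasurable (randomWalkMap U) (μ.prod P)) :
    AEMeasurable (fun q : U × U => q.1 + q.2) (μ.prod ν) := by
  have := hP.1
  rw [← hP.map_resample_eq μ 0] at hW
  have h := (hW.comp_measurable (measurable_resample 0)).eval (Finsupp.single 0 1)
  refine AEMeasurable.of_comp_fst (ν := P) ?_ (IsProbabilityMeasure.ne_zero P)
  simpa [randomWalkMap, Finsupp.support_single] using h

theorem map_randomWalkMap_eq_map_glueWalk (hP : IsIIDProduct ν P) (i : ℕ)
    (hW : AEMeasurable (randomWalkMap U) (μ.prod P))
    {Φ : ((ℕ →₀ ZMod 2) → U) → ((ℕ →₀ ZMod 2) → U)} (hΦ : Measurable Φ)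
    {f : U × U → U × U} (hf : AEMeasurable f (μ.prod ν))
    (hΦf : ∀ a b g, Φ (randomWalkMap U (a, update g i b)) = glueWalk i (f (a, b), g))
    (hG : AEMeasurable (glueWalk i) (((μ.prod ν).map f).prod P)) :
    ((μ.prod P).map (randomWalkMap U)).map Φ = (((μ.prod ν).map f).prod P).map (glueWalk i) := by
  have := hP.1
  rw [← hP.map_resample_eq μ i] at hW ⊢
  rw [AEMeasurable.map_map_of_aemeasurable hW (measurable_resample i).aemeasurable,
    AEMeasurable.map_map_of_aemeasurable hΦ.aemeasurable
      (hW.comp_measurable (measurable_resample i))]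
  have hcomp : Φ ∘ randomWalkMap U ∘ (fun p : (U × U) × (ℕ → U) => (p.1.1, update p.2 i p.1.2))
      = fun p => glueWalk i (f p.1, p.2) := funext fun p => hΦf p.1.1 p.1.2 p.2
  rw [hcomp, Measure.map_comp_prodMap_id hf hG]

end IsIIDProduct

theorem randomWalkLaw_bitFlip_invariant_general (U : Type*) [AddCommGroup U]
    [TopologicalSpace U] [IsTopologicalAddGroup U]
    [MeasurableSpace U] [BorelSpace U]
    (μU : Measure U) [IsProbabilityMeasure μU] [μU.IsAddHaarMeasure]
    (ν : Measure U) [IsProbabilityMeasure ν]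
    (P : Measure (ℕ → U)) (hP : IsIIDProduct ν P)
    (hsym : Measure.map (fun q : U × U => (q.1, q.1 + q.2)) (μU.prod ν) =
      Measure.map (fun q : U × U => (q.1 + q.2, q.1)) (μU.prod ν)) :
    ∀ i : ℕ,
      Measure.map
          (fun ω : (ℕ →₀ ZMod 2) → U => fun v => ω (v + Finsupp.single i 1))
          (Measure.map (randomWalkMap U) (μU.prod P)) =
        Measure.map (randomWalkMap U) (μU.prod P) := by
  intro i
  have := hP.1
  by_cases hW : AEMeasurable (randomWalkMap U) (μU.prod P)
  swap
  · simp [Measure.map_of_not_aemeasurable hW]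
  have hadd := hP.aemeasurable_add_of_aemeasurable_randomWalkMap hW
  have hf₁ := measurable_fst.aemeasurable.prodMk hadd
  have hG : AEMeasurable (glueWalk i) (((μU.prod ν).map fun q => (q.1, q.1 + q.2)).prod P) := by
    refine aemeasurable_glueWalk i hW ?_ ?_ <;>
      rw [AEMeasurable.map_map_of_aemeasurable (by fun_prop) hf₁]
    · exact Measure.map_fst_prod.trans (by simp)
    · exact Measure.map_add_prod_eq_left μU ν hadd
  have hlaw :=
    hP.map_randomWalkMap_eq_map_glueWalk i hW measurable_id hf₁ (randomWalkMap_update i) hG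
  have hflip := hP.map_randomWalkMap_eq_map_glueWalk i hW (measurable_bitFlip i)
    (hadd.prodMk measurable_fst.aemeasurable)
    (fun a b g => by rw [randomWalkMap_update, bitFlip_glueWalk]) (hsym ▸ hG)
  rw [Measure.map_id, hsym] at hlaw
  exact hflip.trans hlaw.symm

/-- If, under `μ_U ⊗ ν`, the pairs `(g₀, g₀+g₁)` and `(g₀+g₁, g₀)` have the same
distribution, then the random-walk law on `U^(𝔽₂^(⊕ℕ))` is also invariant under each
bit-flip `σᵢ : v ↦ v + eᵢ` acting by `(σᵢ·ω)(v) = ω(v + eᵢ)`. -/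
theorem randomWalkLaw_bitFlip_invariant (U : Type*) [AddCommGroup U]
    [TopologicalSpace U] [IsTopologicalAddGroup U] [CompactSpace U]
    [MeasurableSpace U] [BorelSpace U]
    (μU : Measure U) [IsProbabilityMeasure μU] [μU.IsAddHaarMeasure]
    (ν : Measure U) [IsProbabilityMeasure ν]
    (P : Measure (ℕ → U)) (hP : IsIIDProduct ν P)
    (hsym : Measure.map (fun q : U × U => (q.1, q.1 + q.2)) (μU.prod ν) =
      Measure.map (fun q : U × U => (q.1 + q.2, q.1)) (μU.prod ν)) :
    ∀ i : ℕ,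
      Measure.map
          (fun ω : (ℕ →₀ ZMod 2) → U => fun v => ω (v + Finsupp.single i 1))
          (Measure.map (randomWalkMap U) (μU.prod P)) =
        Measure.map (randomWalkMap U) (μU.prod P) :=
  randomWalkLaw_bitFlip_invariant_general U μU ν P hP hsym
end
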